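/- Every ball-basis satisfies the density property: for any measurable set E, almost every point x ∈ E is a density point of E, i.e. for every ε > 0 there exists a ball B ∋ x with μ(B ∩ E) > (1 − ε) μ(B). -/

import Mathlib

open MeasureTheory Set ENNReal NNReal

/-- A ball-basis on a measure space `(X, μ)`: a family of measurable sets of positive
finite measure satisfying conditions B1)-B4) of Karagulyan. -/
structure BallBasis (X : Type*) [MeasurableSpace X] (μ : Measure X) where
  balls : Set (Set X)
  K : ℝ≥0
  K_pos : 0 < K
  measurableSet : ∀ B ∈ balls, MeasurableSet B
  measure_pos : ∀ B ∈ balls, 0 < μ B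
  measure_lt_top : ∀ B ∈ balls, μ B < ∞
  exists_ball : ∀ x y : X, ∃ B ∈ balls, x ∈ B ∧ y ∈ B
  approx : ∀ E : Set X, MeasurableSet E → ∀ ε : ℝ≥0∞, 0 < ε →
      ∃ Bs : ℕ → Set X, (∀ k, Bs k ∈ balls) ∧ μ (symmDiff E (⋃ k, Bs k)) < ε
  hull : Set X → Set X
  hull_mem : ∀ B ∈ balls, hull B ∈ balls
  star_subset_hull : ∀ B ∈ balls,
      (⋃₀ {A | A ∈ balls ∧ μ A ≤ 2 * μ B ∧ (A ∩ B).Nonempty}) ⊆ hull B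
  measure_hull_le : ∀ B ∈ balls, μ (hull B) ≤ (K : ℝ≥0∞) * μ B

namespace BallBasis

variable {X : Type*} [MeasurableSpace X] {μ : Measure X}

/-- `B* = ⋃ {A ∈ ℬ : μ A ≤ 2 μ B, A ∩ B ≠ ∅}`. -/
def star (ℬ : BallBasis X μ) (B : Set X) : Set X :=
  ⋃₀ {A | A ∈ ℬ.balls ∧ μ A ≤ 2 * μ B ∧ (A ∩ B).Nonempty}

/-- The doubling condition for a ball-basis, with doubling constant `η`. -/
def Doubling (ℬ : BallBasis X μ) (η : ℝ≥0) : Prop :=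
  ∀ B ∈ ℬ.balls, ℬ.star B ≠ univ →
    ∃ B' ∈ ℬ.balls, B ⊂ B' ∧ μ B' ≤ (η : ℝ≥0∞) * μ B

end BallBasis

/-!
Fix `ε ∈ (0, 1]` and let `A` be the set of points of `E` all of whose balls have relative
`E`-density at most `1 - ε`. Approximate `E` within `δ` by a countable union `G` of balls. Every
ball `B` of `G` meeting `A` has `ε μ(B) ≤ μ(B \ E) ≤ δ`, so these balls have bounded measure and
the Vitali-type selection for ball-bases yields a disjoint subfamily whose hulls cover them. Hence
`ε μ(A ∩ G) ≤ K ∑ ε μ(Bⱼ) ≤ K μ(G \ E) ≤ K δ`, while `μ(A \ G) ≤ μ(E \ G) ≤ δ`. Letting `δ → 0`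
gives `μ(A) = 0`, and the non-density points of `E` form the countable union of these sets over
`ε = 1/(n+1)`.
-/

open Filter Topology

theorem mul_measure_le_measure_diff_of_measure_inter_le {X : Type*} [MeasurableSpace X]
    {μ : Measure X} {B E : Set X} (hE : MeasurableSet E) (hB : μ B ≠ ∞) {ε : ℝ≥0∞}
    (hε : ε ≤ 1) (h : μ (B ∩ E) ≤ (1 - ε) * μ B) : ε * μ B ≤ μ (B \ E) := by
  have hfin : (1 - ε) * μ B ≠ ∞ := mul_ne_top (sub_ne_top one_ne_top) hB
  refine ENNReal.le_of_add_le_add_left hfin ?_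
  calc (1 - ε) * μ B + ε * μ B = μ B := by rw [← add_mul, tsub_add_cancel_of_le hε, one_mul]
    _ = μ (B ∩ E) + μ (B \ E) := (measure_inter_add_sdiff B hE).symm
    _ ≤ (1 - ε) * μ B + μ (B \ E) := by gcongr

namespace BallBasis

variable {X : Type*} [MeasurableSpace X] {μ : Measure X} (ℬ : BallBasis X μ)

theorem subset_hull {A B : Set X} (hA : A ∈ ℬ.balls) (hB : B ∈ ℬ.balls)
    (hAB : (A ∩ B).Nonempty) (hμ : μ A ≤ 2 * μ B) : A ⊆ ℬ.hull B :=
  fun _ hx => ℬ.star_subset_hull B hB ⟨A, ⟨hA, hμ, hAB⟩, hx⟩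

theorem exists_pairwiseDisjoint_subset_hull {ι : Type*} (B : ι → Set X) (t : Set ι)
    (hB : ∀ a ∈ t, B a ∈ ℬ.balls) {M : ℝ≥0∞} (hM : M ≠ ∞) (hle : ∀ a ∈ t, μ (B a) ≤ M) :
    ∃ u ⊆ t, u.PairwiseDisjoint B ∧ ∀ a ∈ t, ∃ b ∈ u, B a ⊆ ℬ.hull (B b) := by
  obtain ⟨u, hut, hdisj, hcov⟩ := Vitali.exists_disjoint_subfamily_covering_enlargement B t
    (fun a => (μ (B a)).toReal) 2 one_lt_two (fun _ _ => toReal_nonneg) M.toReal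
    (fun a ha => toReal_mono hM (hle a ha))
    (fun a ha => nonempty_of_measure_ne_zero (ℬ.measure_pos _ (hB a ha)).ne')
  refine ⟨u, hut, hdisj, fun a ha => ?_⟩
  obtain ⟨b, hbu, hab, hμ⟩ := hcov a ha
  have hb : B b ∈ ℬ.balls := hB b (hut hbu)
  refine ⟨b, hbu, ℬ.subset_hull (hB a ha) hb hab ?_⟩
  rwa [← toReal_ofNat, ← toReal_mul, toReal_le_toReal (ℬ.measure_lt_top _ (hB a ha)).ne
    (mul_ne_top ofNat_ne_top (ℬ.measure_lt_top _ hb).ne)] at hμ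

def lowDensitySet (E : Set X) (ε : ℝ≥0∞) : Set X :=
  {x | x ∈ E ∧ ∀ B ∈ ℬ.balls, x ∈ B → μ (B ∩ E) ≤ (1 - ε) * μ B}

variable {E : Set X} {ε : ℝ≥0∞}

theorem mul_measure_lowDensitySet_inter_iUnion_le {ι : Type*} [Countable ι]
    (hE : MeasurableSet E) (hε₀ : 0 < ε) (hε₁ : ε ≤ 1) (Bs : ι → Set X)
    (hBs : ∀ k, Bs k ∈ ℬ.balls) (hfin : μ ((⋃ k, Bs k) \ E) ≠ ∞) :
    ε * μ (ℬ.lowDensitySet E ε ∩ ⋃ k, Bs k) ≤ ℬ.K * μ ((⋃ k, Bs k) \ E) := by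
  set A := ℬ.lowDensitySet E ε
  set G := ⋃ k, Bs k
  set t := {k | (Bs k ∩ A).Nonempty}
  have hthin : ∀ k ∈ t, ε * μ (Bs k) ≤ μ (Bs k \ E) := by
    rintro k ⟨x, hxB, -, hx⟩
    exact mul_measure_le_measure_diff_of_measure_inter_le hE
      (ℬ.measure_lt_top _ (hBs k)).ne hε₁ (hx _ (hBs k) hxB)
  have hdiff : ∀ k, Bs k \ E ⊆ G \ E := fun k => sdiff_subset_sdiff_left (subset_iUnion Bs k)
  have hbounded : ∀ k ∈ t, μ (Bs k) ≤ μ (G \ E) / ε := fun k hk => by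
    rw [ENNReal.le_div_iff_mul_le (.inl hε₀.ne') (.inl (hε₁.trans_lt one_lt_top).ne), mul_comm]
    exact (hthin k hk).trans (measure_mono (hdiff k))
  obtain ⟨u, hut, hdisj, hcov⟩ := ℬ.exists_pairwiseDisjoint_subset_hull Bs t (fun k _ => hBs k)
    (div_ne_top hfin hε₀.ne') hbounded
  have hcover : A ∩ G ⊆ ⋃ j ∈ u, ℬ.hull (Bs j) := by
    rintro x ⟨hxA, hxG⟩
    obtain ⟨k, hk⟩ := mem_iUnion.mp hxG
    obtain ⟨j, hju, hsub⟩ := hcov k ⟨x, hk, hxA⟩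
    exact mem_biUnion hju (hsub hk)
  have hsum : ∑' j : u, ε * μ (Bs j) ≤ μ (G \ E) :=
    calc ∑' j : u, ε * μ (Bs j) ≤ ∑' j : u, μ (Bs j \ E) :=
          ENNReal.tsum_le_tsum fun j => hthin j (hut j.2)
      _ = μ (⋃ j ∈ u, Bs j \ E) :=
          (measure_biUnion u.to_countable (hdisj.mono fun _ => sdiff_subset)
            fun j _ => (ℬ.measurableSet _ (hBs j)).diff hE).symm
      _ ≤ μ (G \ E) := measure_mono (iUnion₂_subset fun j _ => hdiff j)
  calc ε * μ (A ∩ G) ≤ ε * ∑' j : u, μ (ℬ.hull (Bs j)) := by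
        gcongr
        exact (measure_mono hcover).trans (measure_biUnion_le μ u.to_countable _)
    _ ≤ ε * ∑' j : u, ℬ.K * μ (Bs j) := by
        gcongr with j
        exact ℬ.measure_hull_le _ (hBs j)
    _ = ℬ.K * ∑' j : u, ε * μ (Bs j) := by
        rw [ENNReal.tsum_mul_left, ENNReal.tsum_mul_left, mul_left_comm]
    _ ≤ ℬ.K * μ (G \ E) := by gcongr

theorem mul_measure_lowDensitySet_le (hE : MeasurableSet E) (hε₀ : 0 < ε) (hε₁ : ε ≤ 1)
    {δ : ℝ≥0∞} (hδ₀ : 0 < δ) (hδ : δ ≠ ∞) :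
    ε * μ (ℬ.lowDensitySet E ε) ≤ (ε + ℬ.K) * δ := by
  set A := ℬ.lowDensitySet E ε
  obtain ⟨Bs, hBs, happrox⟩ := ℬ.approx E hE δ hδ₀
  set G := ⋃ k, Bs k
  have hGE : μ (G \ E) ≤ δ :=
    (measure_mono (by rw [Set.symmDiff_def]; exact subset_union_right)).trans happrox.le
  have hEG : μ (E \ G) ≤ δ :=
    (measure_mono (by rw [Set.symmDiff_def]; exact subset_union_left)).trans happrox.le
  have hsplit : A ⊆ (E \ G) ∪ (A ∩ G) := fun x hx => by
    by_cases hxG : x ∈ G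
    exacts [.inr ⟨hx, hxG⟩, .inl ⟨hx.1, hxG⟩]
  calc ε * μ A ≤ ε * (μ (E \ G) + μ (A ∩ G)) := by
        gcongr
        exact (measure_mono hsplit).trans (measure_union_le _ _)
    _ = ε * μ (E \ G) + ε * μ (A ∩ G) := mul_add _ _ _
    _ ≤ ε * δ + ℬ.K * δ := add_le_add (by gcongr)
        ((ℬ.mul_measure_lowDensitySet_inter_iUnion_le hE hε₀ hε₁ Bs hBs
          (ne_top_of_le_ne_top hδ hGE)).trans (by gcongr))
    _ = (ε + ℬ.K) * δ := (add_mul _ _ _).symm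

theorem measure_lowDensitySet_eq_zero (hE : MeasurableSet E) (hε₀ : 0 < ε) (hε₁ : ε ≤ 1) :
    μ (ℬ.lowDensitySet E ε) = 0 := by
  have hlim : Tendsto (fun n : ℕ => (ε + ℬ.K) * (n : ℝ≥0∞)⁻¹) atTop (𝓝 0) := by
    simpa using ENNReal.Tendsto.const_mul ENNReal.tendsto_inv_nat_nhds_zero
      (.inr (add_ne_top.2 ⟨(hε₁.trans_lt one_lt_top).ne, coe_ne_top⟩))
  have hbound : ∀ᶠ n : ℕ in atTop, ε * μ (ℬ.lowDensitySet E ε) ≤ (ε + ℬ.K) * (n : ℝ≥0∞)⁻¹ :=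
    eventually_atTop.2 ⟨1, fun n hn => ℬ.mul_measure_lowDensitySet_le hE hε₀ hε₁
      (ENNReal.inv_pos.2 (natCast_ne_top n)) (inv_ne_top.2 (Nat.cast_ne_zero.2 (by omega)))⟩
  have hzero : ε * μ (ℬ.lowDensitySet E ε) = 0 := nonpos_iff_eq_zero.1 (ge_of_tendsto hlim hbound)
  exact (mul_eq_zero.1 hzero).resolve_left hε₀.ne'

end BallBasis

/-- Every ball-basis satisfies the density property: for any measurable set `E`,
almost every point of `E` is a density point of `E`. -/
theorem ballBasis_density_property {X : Type*} [MeasurableSpace X]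
    {μ : Measure X} (ℬ : BallBasis X μ) {E : Set X} (hE : MeasurableSet E) :
    μ {x | x ∈ E ∧ ¬ (∀ ε : ℝ≥0∞, 0 < ε →
      ∃ B ∈ ℬ.balls, x ∈ B ∧ (1 - ε) * μ B < μ (B ∩ E))} = 0 := by
  refine measure_mono_null (t := ⋃ n : ℕ, ℬ.lowDensitySet E ((n : ℝ≥0∞) + 1)⁻¹) ?_
    (measure_iUnion_null fun n => ℬ.measure_lowDensitySet_eq_zero hE
      (ENNReal.inv_pos.2 (add_ne_top.2 ⟨natCast_ne_top n, one_ne_top⟩))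
      (ENNReal.inv_le_one.2 le_add_self))
  rintro x ⟨hxE, hx⟩
  push Not at hx
  obtain ⟨ε, hε₀, hε⟩ := hx
  obtain ⟨n, hn⟩ := ENNReal.exists_inv_nat_lt hε₀.ne'
  have hn' : ((n : ℝ≥0∞) + 1)⁻¹ ≤ ε := (ENNReal.inv_le_inv.2 le_self_add).trans hn.le
  refine mem_iUnion.2 ⟨n, hxE, fun B hB hxB => (hε B hB hxB).trans ?_⟩
  gcongr
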